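/- arXiv:math-ph/0504022 — 2 statements merged into one kernel-verified Lean document; each statement's English description precedes it below -/
import Mathlib

section
/- For every m ≥ 0, the generating function of centrally symmetric permutations of odd degree satisfies Φ_HT(2m+1; z) := ∑_{s ∈ S^HT_{2m+1}} z^{inv(s)} = [∏_{i=1}^{m} (1 + z^{2i+1})] · Φ(m; z²), where Φ(m; w) = ∑_{s ∈ S_m} w^{inv(s)}. -/
def inversions {n : ℕ} (s : Equiv.Perm (Fin n)) : ℕ :=
  (Finset.univ.filter fun p : Fin n × Fin n => p.1 < p.2 ∧ s p.2 < s p.1).card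

def htPerms (n : ℕ) : Finset (Equiv.Perm (Fin n)) :=
  Finset.univ.filter fun s => ∀ i : Fin n, s i.rev = (s i).rev

/-!
A half-turn symmetric permutation of `Fin (n + 2)` takes its extreme values `n + 1` and `0` at
mirror positions `q ≠ q.rev`; deleting both leaves a half-turn symmetric permutation of `Fin n`,
and any such permutation can conversely be re-inserted around any `q ≠ q.rev`. A maximal value at
position `q` lies in `n + 1 - q` inversions, a minimal value at position `q'` in `q'` of them. For
`n = 2m + 1` the weights of the admissible positions are `z ^ 2j` and `z ^ (2m + 3 + 2j)` for
`0 ≤ j ≤ m`, which produces the factor `(1 + z ^ (2m + 3)) (1 + z² + ⋯ + z ^ 2m)`. The same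
insertion of a maximum into ordinary permutations gives
`Φ(m + 1; w) = (1 + w + ⋯ + w ^ m) Φ(m; w)`.
-/

open Finset Equiv

namespace Fin

lemma val_succAbove {n : ℕ} (p : Fin (n + 1)) (i : Fin n) :
    (p.succAbove i : ℕ) = if (i : ℕ) < p then (i : ℕ) else i + 1 := by
  unfold succAbove
  split_ifs <;> simp_all [Fin.lt_def]

lemma succAbove_eq_rev_iff {n : ℕ} {q : Fin (n + 2)} {q' : Fin (n + 1)} :
    q.succAbove q' = q.rev ↔
      ((q' : ℕ) < q ∧ (q' : ℕ) + q = n + 1) ∨ ((q : ℕ) ≤ q' ∧ (q' : ℕ) + q = n) := by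
  rw [Fin.ext_iff, val_succAbove, val_rev]
  split_ifs <;> omega

lemma rev_succAbove_succAbove {n : ℕ} {q : Fin (n + 2)} {q' : Fin (n + 1)}
    (h : q.succAbove q' = q.rev) (i : Fin n) :
    (q.succAbove (q'.succAbove i)).rev = q.succAbove (q'.succAbove i.rev) := by
  rw [succAbove_eq_rev_iff] at h
  ext
  simp only [val_rev, val_succAbove]
  split_ifs <;> omega

end Fin

section Insertion

variable {n : ℕ}

def insertPerm (p v : Fin (n + 1)) (τ : Perm (Fin n)) : Perm (Fin (n + 1)) :=
  (finSuccEquiv' p).trans ((optionCongr τ).trans (finSuccEquiv' v).symm)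

@[simp]
lemma insertPerm_apply_self (p v : Fin (n + 1)) (τ : Perm (Fin n)) : insertPerm p v τ p = v := by
  simp [insertPerm]

@[simp]
lemma insertPerm_apply_succAbove (p v : Fin (n + 1)) (τ : Perm (Fin n)) (i : Fin n) :
    insertPerm p v τ (p.succAbove i) = v.succAbove (τ i) := by
  simp [insertPerm]

lemma insertPerm_bijective (v : Fin (n + 1)) :
    Function.Bijective fun x : Fin (n + 1) × Perm (Fin n) => insertPerm x.1 v x.2 := by
  rw [Fintype.bijective_iff_injective_and_card]
  refine ⟨fun ⟨p, τ⟩ ⟨p', τ'⟩ h => ?_, by simp [Fintype.card_perm, Nat.factorial_succ]⟩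
  obtain rfl : p = p' := (insertPerm p' v τ').injective <| by
    simpa using (DFunLike.congr_fun h p).symm
  have hτ (i : Fin n) : τ i = τ' i := Fin.succAbove_right_injective (p := v) <| by
    simpa using DFunLike.congr_fun h (p.succAbove i)
  simp [Equiv.ext hτ]

noncomputable def insertPermEquiv (v : Fin (n + 1)) :
    Fin (n + 1) × Perm (Fin n) ≃ Perm (Fin (n + 1)) :=
  .ofBijective _ (insertPerm_bijective v)

lemma inversions_eq_sum (σ : Perm (Fin n)) :
    inversions σ = ∑ a, ∑ b, if a < b ∧ σ b < σ a then 1 else 0 := by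
  rw [inversions, card_filter, ← univ_product_univ, sum_product]

lemma inversions_insertPerm (p v : Fin (n + 1)) (τ : Perm (Fin n)) :
    inversions (insertPerm p v τ) = inversions τ +
      #{b | p < b ∧ insertPerm p v τ b < v} + #{a | a < p ∧ v < insertPerm p v τ a} := by
  set σ := insertPerm p v τ
  have hcol : ∑ i, (if p.succAbove i < p ∧ σ p < σ (p.succAbove i) then 1 else 0)
      = #{a | a < p ∧ v < σ a} := by
    rw [card_filter, Fin.sum_univ_succAbove _ p]
    simp [σ]
  have hrow (i : Fin n) : ∑ b, (if p.succAbove i < b ∧ σ b < σ (p.succAbove i) then 1 else 0)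
      = (if p.succAbove i < p ∧ σ p < σ (p.succAbove i) then 1 else 0)
        + ∑ j, if i < j ∧ τ j < τ i then 1 else 0 := by
    rw [Fin.sum_univ_succAbove _ p]
    simp [σ, Fin.succAbove_lt_succAbove_iff]
  rw [inversions_eq_sum, Fin.sum_univ_succAbove _ p, sum_congr rfl fun i _ => hrow i,
    sum_add_distrib, hcol, ← inversions_eq_sum]
  simp only [card_filter, insertPerm_apply_self, σ]
  ring

lemma inversions_insertPerm_last (p : Fin (n + 1)) (τ : Perm (Fin n)) :
    inversions (insertPerm p (Fin.last n) τ) = inversions τ + (n - p) := by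
  have hmax : #{b | p < b ∧ insertPerm p (Fin.last n) τ b < Fin.last n} = #{b | p < b} := by
    congr 1
    refine filter_congr fun b _ => and_iff_left_of_imp fun hb => ?_
    have := (insertPerm p (Fin.last n) τ).injective.ne hb.ne'
    rwa [insertPerm_apply_self, ← Fin.lt_last_iff_ne_last] at this
  rw [inversions_insertPerm, hmax, filter_lt_eq_Ioi]
  simp [Fin.not_lt.2 (Fin.le_last _)]

lemma inversions_insertPerm_zero (p : Fin (n + 1)) (τ : Perm (Fin n)) :
    inversions (insertPerm p 0 τ) = inversions τ + p := by
  have hmin : #{a | a < p ∧ 0 < insertPerm p 0 τ a} = #{a | a < p} := by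
    congr 1
    refine filter_congr fun a _ => and_iff_left_of_imp fun ha => ?_
    have := (insertPerm p 0 τ).injective.ne ha.ne
    rwa [insertPerm_apply_self, ← Fin.pos_iff_ne_zero] at this
  rw [inversions_insertPerm, hmin, filter_gt_eq_Iio]
  simp

end Insertion

lemma sum_pow_inversions_succ {R : Type*} [CommSemiring R] (w : R) (n : ℕ) :
    ∑ σ : Perm (Fin (n + 1)), w ^ inversions σ
      = (∑ j ∈ range (n + 1), w ^ j) * ∑ τ : Perm (Fin n), w ^ inversions τ := by
  rw [← (insertPermEquiv (Fin.last n)).sum_comp, Fintype.sum_prod_type]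
  simp only [insertPermEquiv, Equiv.ofBijective_apply, inversions_insertPerm_last, pow_add,
    ← sum_mul, ← mul_sum]
  rw [mul_comm, ← sum_range_reflect, Fin.sum_univ_eq_sum_range (fun j => w ^ (n - j))]
  simp

lemma mem_htPerms {n : ℕ} {s : Perm (Fin n)} : s ∈ htPerms n ↔ ∀ i, s i.rev = (s i).rev := by
  simp [htPerms]

section HalfTurn

variable {n : ℕ}

/-- `n + 1` at position `q`, `0` at position `q.succAbove q'`, and the pattern `s` elsewhere. -/
def insertExtremes (q : Fin (n + 2)) (q' : Fin (n + 1)) (s : Perm (Fin n)) : Perm (Fin (n + 2)) :=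
  insertPerm q (Fin.last (n + 1)) (insertPerm q' 0 s)

lemma insertExtremes_mem_htPerms_iff {q : Fin (n + 2)} {q' : Fin (n + 1)} {s : Perm (Fin n)} :
    insertExtremes q q' s ∈ htPerms (n + 2) ↔ q.succAbove q' = q.rev ∧ s ∈ htPerms n := by
  set t := insertExtremes q q' s
  have ht_q : t q = Fin.last (n + 1) := by simp [t, insertExtremes]
  have ht_q' : t (q.succAbove q') = 0 := by simp [t, insertExtremes]
  have ht_i (i : Fin n) :
      t (q.succAbove (q'.succAbove i)) = (Fin.last (n + 1)).succAbove (Fin.succAbove 0 (s i)) := by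
    simp [t, insertExtremes]
  have hV : (Fin.last (n + 1)).succAbove (0 : Fin (n + 1)) = (Fin.last (n + 1)).rev := by simp
  constructor
  · intro ht
    have hq : q.succAbove q' = q.rev :=
      t.injective (by rw [ht_q', (mem_htPerms.1 ht) q, ht_q, Fin.rev_last])
    refine ⟨hq, mem_htPerms.2 fun i => ?_⟩
    apply Fin.succAbove_right_injective.comp Fin.succAbove_right_injective
    simp only [Function.comp_apply]
    rw [← ht_i, ← Fin.rev_succAbove_succAbove hq, (mem_htPerms.1 ht), ht_i,
      Fin.rev_succAbove_succAbove hV]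
  · rintro ⟨hq, hs⟩
    refine mem_htPerms.2 fun x => ?_
    rcases Fin.eq_self_or_eq_succAbove q x with rfl | ⟨y, rfl⟩
    · rw [← hq, ht_q', ht_q, Fin.rev_last]
    rcases Fin.eq_self_or_eq_succAbove q' y with rfl | ⟨i, rfl⟩
    · rw [hq, Fin.rev_rev, ht_q, ← hq, ht_q', Fin.rev_zero]
    · rw [Fin.rev_succAbove_succAbove hq, ht_i, ht_i, (mem_htPerms.1 hs) i,
        Fin.rev_succAbove_succAbove hV]

end HalfTurn

lemma sum_htPerms_add_two {R : Type*} [CommSemiring R] (z : R) (n : ℕ) :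
    ∑ t ∈ htPerms (n + 2), z ^ inversions t
      = (∑ x ∈ univ.filter (fun x : Fin (n + 2) × Fin (n + 1) => x.1.succAbove x.2 = x.1.rev),
          z ^ (x.2 + (n + 1 - x.1))) * ∑ s ∈ htPerms n, z ^ inversions s := by
  let e : (Fin (n + 2) × Fin (n + 1)) × Perm (Fin n) ≃ Perm (Fin (n + 2)) :=
    (prodAssoc _ _ _).trans ((prodCongr (.refl _) (insertPermEquiv 0)).trans
      (insertPermEquiv (Fin.last (n + 1))))
  have he (x) : e x = insertExtremes x.1.1 x.1.2 x.2 := rfl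
  rw [sum_mul_sum, ← sum_product']
  refine (sum_equiv e (fun x => ?_) (fun x _ => ?_)).symm
  · simp [he, insertExtremes_mem_htPerms_iff]
  · rw [he, insertExtremes, inversions_insertPerm_last, inversions_insertPerm_zero, pow_add,
      pow_add]
    ring

lemma sum_filter_succAbove_eq_rev {R : Type*} [CommSemiring R] (z : R) (m : ℕ) :
    ∑ x ∈ univ.filter (fun x : Fin (2 * m + 3) × Fin (2 * m + 2) => x.1.succAbove x.2 = x.1.rev),
        z ^ (x.2 + (2 * m + 2 - x.1))
      = (1 + z ^ (2 * m + 3)) * ∑ j ∈ range (m + 1), (z ^ 2) ^ j := by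
  -- the unique `q` with `q.succAbove q' = q.rev`
  let partner (q' : Fin (2 * m + 2)) : Fin (2 * m + 3) :=
    ⟨if (q' : ℕ) ≤ m then 2 * m + 2 - q' else 2 * m + 1 - q', by split_ifs <;> omega⟩
  have hpartner (q' : Fin (2 * m + 2)) :
      (partner q' : ℕ) = if (q' : ℕ) ≤ m then 2 * m + 2 - q' else 2 * m + 1 - q' := rfl
  have hS {x : Fin (2 * m + 3) × Fin (2 * m + 2)}
      (hx : x ∈ univ.filter fun x => x.1.succAbove x.2 = x.1.rev) :
      ((x.2 : ℕ) < x.1 ∧ (x.2 : ℕ) + x.1 = 2 * m + 2) ∨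
        ((x.1 : ℕ) ≤ x.2 ∧ (x.2 : ℕ) + x.1 = 2 * m + 1) := by
    simpa only [mem_filter, mem_univ, true_and, Fin.succAbove_eq_rev_iff] using hx
  rw [sum_nbij' Prod.snd (fun q' => (partner q', q')) (fun _ _ => mem_univ _) ?_ ?_
    (fun _ _ => rfl) ?_
    (g := fun q' : Fin (2 * m + 2) => z ^ (if (q' : ℕ) ≤ m then 2 * (q' : ℕ) else 2 * q' + 1))]
  · rw [Fin.sum_univ_eq_sum_range (fun k => z ^ (if k ≤ m then 2 * k else 2 * k + 1)),
      show 2 * m + 2 = (m + 1) + (m + 1) by ring, sum_range_add, add_mul, one_mul, mul_sum]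
    congr 1 <;> refine sum_congr rfl fun k hk => ?_
    · rw [if_pos (by simp at hk; omega), pow_mul]
    · rw [if_neg (by omega), ← pow_mul, ← pow_add]
      ring_nf
  · intro q' _
    simp only [mem_filter, mem_univ, true_and, Fin.succAbove_eq_rev_iff, hpartner]
    split_ifs <;> omega
  · intro x hx
    have := hS hx
    refine Prod.ext (Fin.ext ?_) rfl
    rw [hpartner]
    split_ifs <;> omega
  · intro x hx
    have := hS hx
    congr 1
    split_ifs <;> omega

theorem stmt6 {R : Type*} [CommRing R] (m : ℕ) (z : R) :
    (∑ s ∈ htPerms (2 * m + 1), z ^ inversions s) =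
      (∏ i ∈ Finset.range m, (1 + z ^ (2 * i + 3))) *
        ∑ s : Equiv.Perm (Fin m), (z ^ 2) ^ inversions s := by
  induction m with
  | zero => simp [htPerms, inversions, Fin.eq_zero]
  | succ m ih =>
    rw [show 2 * (m + 1) + 1 = 2 * m + 1 + 2 by ring, sum_htPerms_add_two,
      sum_filter_succAbove_eq_rev, ih, prod_range_succ, sum_pow_inversions_succ]
    ring
end

section
/- With σ(x) = x − x^{-1} and a a nonzero field element with a^{2i} ≠ ±1 for relevant i, the identity (−1)^m σ^m(a²) a^{−m(2m−1)} ∑_{s ∈ S^HT_{2m}} (−a²)^{inv(s)} = ∏_{i=1}^{2m} σ(a^i) holds. -/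
namespace ST18
open Finset Equiv

variable {m : ℕ}

lemma rev_ne_self (j : Fin (2*m+2)) : j.rev ≠ j := by
  intro hh
  have := congrArg Fin.val hh
  rw [Fin.val_rev] at this
  omega

/-- The value set: complement of `{j, j.rev}`. -/
def vset (m : ℕ) (j : Fin (2*m+2)) : Finset (Fin (2*m+2)) := {j, j.rev}ᶜ

lemma vset_card (j : Fin (2*m+2)) : (vset m j).card = 2*m := by
  rw [vset, Finset.card_compl, Finset.card_insert_of_notMem
    (Finset.notMem_singleton.mpr (Ne.symm (rev_ne_self j)))]
  simp

/-- The increasing bijection `Fin (2m) ≃o vset`. -/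
noncomputable def eIso (m : ℕ) (j : Fin (2*m+2)) : Fin (2*m) ≃o (vset m j) :=
  (vset m j).orderIsoOfFin (vset_card j)

/-- The order embedding `Fin (2m) ↪o Fin (2m+2)` onto `vset`. -/
noncomputable def emb (m : ℕ) (j : Fin (2*m+2)) : Fin (2*m) ↪o Fin (2*m+2) :=
  (vset m j).orderEmbOfFin (vset_card j)

lemma emb_mem (j : Fin (2*m+2)) (k : Fin (2*m)) : emb m j k ∈ vset m j :=
  Finset.orderEmbOfFin_mem _ _ _

lemma emb_ne (j : Fin (2*m+2)) (k : Fin (2*m)) : emb m j k ≠ j ∧ emb m j k ≠ j.rev := by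
  have := emb_mem j k
  simp only [vset, Finset.mem_compl, Finset.mem_insert, Finset.mem_singleton] at this
  tauto

lemma emb_surj (j : Fin (2*m+2)) {u : Fin (2*m+2)} (hu : u ∈ vset m j) :
    ∃ k, emb m j k = u := by
  have h := Finset.range_orderEmbOfFin (vset m j) (vset_card j)
  have : u ∈ Set.range (emb m j) := by rw [emb, h]; exact_mod_cast hu
  exact this

lemma emb_rev (j : Fin (2*m+2)) (k : Fin (2*m)) : emb m j k.rev = (emb m j k).rev := by
  have hmem : ∀ x : Fin (2*m), (emb m j x.rev).rev ∈ vset m j := by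
    intro x
    have := emb_mem j x.rev
    simp only [vset, Finset.mem_compl, Finset.mem_insert, Finset.mem_singleton] at this ⊢
    push_neg at this ⊢
    constructor
    · intro hh
      exact this.2 (by rw [← Fin.rev_rev (emb m j x.rev), hh])
    · intro hh; exact this.1 (Fin.rev_injective (by rw [hh]))
  have hmono : StrictMono (fun x : Fin (2*m) => (emb m j x.rev).rev) := by
    intro x y hxy
    have h1 : y.rev < x.rev := Fin.rev_lt_rev.mpr hxy
    have h2 : emb m j y.rev < emb m j x.rev := (emb m j).strictMono h1
    exact Fin.rev_lt_rev.mpr h2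
  have huniq := Finset.orderEmbOfFin_unique (vset_card j) hmem hmono
  have h2 : (emb m j k.rev).rev = emb m j k := congrFun huniq k
  rw [← h2, Fin.rev_rev]

lemma coe_eIso (j : Fin (2*m+2)) (k : Fin (2*m)) : (eIso m j k : Fin (2*m+2)) = emb m j k :=
  Finset.coe_orderIsoOfFin_apply _ _ _

/-- interior position -/
def mid (k : Fin (2*m)) : Fin (2*m+2) := k.castSucc.succ

lemma mid_val (k : Fin (2*m)) : (mid k).val = k.val + 1 := rfl

lemma mid_ne_zero (k : Fin (2*m)) : mid k ≠ 0 := by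
  intro hh; have := congrArg Fin.val hh; rw [mid_val] at this; simp at this

lemma mid_ne_last (k : Fin (2*m)) : mid k ≠ Fin.last (2*m+1) := by
  intro hh; have := congrArg Fin.val hh; rw [mid_val] at this
  simp only [Fin.val_last] at this; omega

lemma mid_lt_iff (k l : Fin (2*m)) : mid k < mid l ↔ k < l := by
  rw [Fin.lt_def, Fin.lt_def, mid_val, mid_val]; omega

lemma mid_inj : Function.Injective (mid (m := m)) := by
  intro k l hh
  have := congrArg Fin.val hh
  rw [mid_val, mid_val] at this
  exact Fin.ext (by omega)

lemma rev_mid (k : Fin (2*m)) : (mid k).rev = mid k.rev := by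
  apply Fin.ext
  rw [Fin.val_rev, mid_val, mid_val, Fin.val_rev]
  omega

lemma exists_eq_mid {i : Fin (2*m+2)} (h0 : i ≠ 0) (hl : i ≠ Fin.last (2*m+1)) :
    ∃ k : Fin (2*m), i = mid k := by
  have hv0 : i.val ≠ 0 := fun hh => h0 (Fin.ext hh)
  have hvl : i.val ≠ 2*m+1 := fun hh => hl (Fin.ext (by simpa using hh))
  have := i.isLt
  refine ⟨⟨i.val - 1, by omega⟩, Fin.ext ?_⟩
  rw [mid_val]; simp; omega

lemma cases3 (i : Fin (2*m+2)) : i = 0 ∨ i = Fin.last (2*m+1) ∨ ∃ k : Fin (2*m), i = mid k := by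
  by_cases h0 : i = 0
  · exact Or.inl h0
  by_cases hl : i = Fin.last (2*m+1)
  · exact Or.inr (Or.inl hl)
  exact Or.inr (Or.inr (exists_eq_mid h0 hl))

/-- the insertion: function level -/
noncomputable def extFun (j : Fin (2*m+2)) (s : Equiv.Perm (Fin (2*m))) :
    Fin (2*m+2) → Fin (2*m+2) :=
  Fin.cons j (Fin.snoc (fun k => emb m j (s k)) j.rev)

@[simp] lemma extFun_zero (j : Fin (2*m+2)) (s : Equiv.Perm (Fin (2*m))) :
    extFun j s 0 = j := rfl

@[simp] lemma extFun_last (j : Fin (2*m+2)) (s : Equiv.Perm (Fin (2*m))) :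
    extFun j s (Fin.last (2*m+1)) = j.rev := by
  rw [extFun, ← Fin.succ_last, Fin.cons_succ, Fin.snoc_last]

@[simp] lemma extFun_mid (j : Fin (2*m+2)) (s : Equiv.Perm (Fin (2*m))) (k : Fin (2*m)) :
    extFun j s (mid k) = emb m j (s k) := by
  rw [extFun, mid, Fin.cons_succ, Fin.snoc_castSucc]

lemma extFun_inj (j : Fin (2*m+2)) (s : Equiv.Perm (Fin (2*m))) :
    Function.Injective (extFun j s) := by
  intro i1 i2 hh
  rcases cases3 i1 with h1 | h1 | ⟨k1, h1⟩ <;> rcases cases3 i2 with h2 | h2 | ⟨k2, h2⟩ <;>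
    subst h1 <;> subst h2 <;> simp only [extFun_zero, extFun_last, extFun_mid] at hh
  · rfl
  · exact absurd hh.symm (rev_ne_self j)
  · exact absurd hh.symm (emb_ne j (s k2)).1
  · exact absurd hh (rev_ne_self j)
  · rfl
  · exact absurd hh.symm (emb_ne j (s k2)).2
  · exact absurd hh (emb_ne j (s k1)).1
  · exact absurd hh (emb_ne j (s k1)).2
  · exact congrArg mid (s.injective ((emb m j).injective hh))

/-- the insertion as a permutation -/
noncomputable def F (j : Fin (2*m+2)) (s : Equiv.Perm (Fin (2*m))) :
    Equiv.Perm (Fin (2*m+2)) :=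
  Equiv.ofBijective (extFun j s) ((Finite.injective_iff_bijective).mp (extFun_inj j s))

@[simp] lemma F_apply (j : Fin (2*m+2)) (s : Equiv.Perm (Fin (2*m))) (i : Fin (2*m+2)) :
    F j s i = extFun j s i := rfl

lemma F_mem (j : Fin (2*m+2)) {s : Equiv.Perm (Fin (2*m))} (hs : s ∈ htPerms (2*m)) :
    F j s ∈ htPerms (2*m+2) := by
  rw [htPerms, Finset.mem_filter] at hs ⊢
  refine ⟨Finset.mem_univ _, fun i => ?_⟩
  rcases cases3 i with h | h | ⟨k, h⟩ <;> subst h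
  · rw [F_apply, F_apply, Fin.rev_zero, extFun_zero, extFun_last]
  · rw [F_apply, F_apply, Fin.rev_last, extFun_zero, extFun_last, Fin.rev_rev]
  · rw [F_apply, F_apply, rev_mid, extFun_mid, extFun_mid, hs.2 k, emb_rev]

lemma inv_F (j : Fin (2*m+2)) (s : Equiv.Perm (Fin (2*m))) :
    inversions (F j s) = (if j.rev < j then 2*j.val - 1 else 2*j.val) + inversions s := by
  classical
  set C : Fin (2*m+2) × Fin (2*m+2) → Prop :=
    fun p => p.1 < p.2 ∧ F j s p.2 < F j s p.1 with hC
  have hsplit : ∀ (P Q : Fin (2*m+2) × Fin (2*m+2) → Prop) [DecidablePred P] [DecidablePred Q],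
      (Finset.univ.filter P).card =
        (Finset.univ.filter fun p => P p ∧ Q p).card +
        (Finset.univ.filter fun p => P p ∧ ¬ Q p).card := by
    intro P Q _ _
    rw [← Finset.filter_filter, ← Finset.filter_filter,
      Finset.card_filter_add_card_filter_not]
  have e0 : inversions (F j s) = (Finset.univ.filter C).card := rfl
  have h1 := hsplit C (fun p => p.1 = 0)
  have h2 := hsplit (fun p => C p ∧ p.1 = 0) (fun p => p.2 = Fin.last (2*m+1))
  have h3 := hsplit (fun p => C p ∧ ¬ p.1 = 0) (fun p => p.2 = Fin.last (2*m+1))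
  -- part A
  have hA : (Finset.univ.filter fun p => (C p ∧ p.1 = 0) ∧ p.2 = Fin.last (2*m+1)).card
      = if j.rev < j then 1 else 0 := by
    split_ifs with hlt
    · rw [Finset.card_eq_one]
      refine ⟨((0 : Fin (2*m+2)), Fin.last (2*m+1)), ?_⟩
      ext p
      simp only [Finset.mem_filter, Finset.mem_univ, true_and, Finset.mem_singleton, hC]
      constructor
      · rintro ⟨⟨-, hp1⟩, hp2⟩
        exact Prod.ext hp1 hp2
      · rintro rfl
        refine ⟨⟨⟨?_, ?_⟩, rfl⟩, rfl⟩
        · exact Fin.pos_of_ne_zero (by simp [Fin.ext_iff])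
        · simpa using hlt
    · rw [Finset.card_eq_zero, Finset.filter_eq_empty_iff]
      rintro p - ⟨⟨⟨-, hval⟩, hp1⟩, hp2⟩
      rw [hp1, hp2] at hval
      simp only [F_apply, extFun_zero, extFun_last] at hval
      exact hlt hval
  -- part B
  have hB1 : (Finset.univ.filter fun k : Fin (2*m) => emb m j (s k) < j).card
      = (Finset.univ.filter fun p => (C p ∧ p.1 = 0) ∧ ¬ p.2 = Fin.last (2*m+1)).card := by
    refine Finset.card_bij (fun k _ => ((0 : Fin (2*m+2)), mid k)) ?_ ?_ ?_
    · intro k hk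
      have hk' : emb m j (s k) < j := (Finset.mem_filter.mp hk).2
      refine Finset.mem_filter.mpr ⟨Finset.mem_univ _,
        ⟨⟨Fin.pos_of_ne_zero (mid_ne_zero k), ?_⟩, rfl⟩, mid_ne_last k⟩
      simpa using hk'
    · intro k1 hk1 k2 hk2 hh
      exact mid_inj (congrArg Prod.snd hh)
    · intro p hp
      simp only [Finset.mem_filter, Finset.mem_univ, true_and, hC] at hp
      obtain ⟨⟨⟨hlt, hval⟩, hp1⟩, hp2⟩ := hp
      have hp2' : p.2 ≠ 0 := by
        intro hh; rw [hh, hp1] at hlt; exact lt_irrefl _ hlt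
      obtain ⟨k, hk⟩ := exists_eq_mid hp2' hp2
      refine ⟨k, Finset.mem_filter.mpr ⟨Finset.mem_univ _, ?_⟩, ?_⟩
      · have := hval
        rw [hp1, hk] at this
        simpa using this
      · exact Prod.ext hp1.symm hk.symm
  have hB2 : (Finset.univ.filter fun k : Fin (2*m) => emb m j (s k) < j).card
      = (Finset.univ.filter fun w : Fin (2*m) => emb m j w < j).card := by
    refine Finset.card_bij (fun k _ => s k) ?_ ?_ ?_
    · intro k hk
      simp only [Finset.mem_filter, Finset.mem_univ, true_and] at hk ⊢
      exact hk
    · intro k1 hk1 k2 hk2 hh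
      exact s.injective hh
    · intro w hw
      simp only [Finset.mem_filter, Finset.mem_univ, true_and] at hw
      exact ⟨s.symm w, Finset.mem_filter.mpr ⟨Finset.mem_univ _, by simpa using hw⟩, by simp⟩
  have hB3 : (Finset.univ.filter fun w : Fin (2*m) => emb m j w < j).card
      = ((vset m j).filter fun u => u < j).card := by
    refine Finset.card_bij (fun w _ => emb m j w) ?_ ?_ ?_
    · intro w hw
      simp only [Finset.mem_filter, Finset.mem_univ, true_and] at hw
      exact Finset.mem_filter.mpr ⟨emb_mem j w, hw⟩
    · intro w1 hw1 w2 hw2 hh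
      exact (emb m j).injective hh
    · intro u hu
      rw [Finset.mem_filter] at hu
      obtain ⟨k, hk⟩ := emb_surj j hu.1
      exact ⟨k, Finset.mem_filter.mpr ⟨Finset.mem_univ _, hk ▸ hu.2⟩, hk⟩
  have hcover : vset m j ∪ {j, j.rev} = Finset.univ := by
    rw [vset]; ext u; simp; tauto
  have hdisj : Disjoint (vset m j) ({j, j.rev} : Finset (Fin (2*m+2))) := by
    rw [vset]; exact disjoint_compl_left
  have hpairB : (({j, j.rev} : Finset (Fin (2*m+2))).filter fun u => u < j).card
      = if j.rev < j then 1 else 0 := by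
    split_ifs with hlt
    · rw [Finset.card_eq_one]
      refine ⟨j.rev, ?_⟩
      ext u
      simp only [Finset.mem_filter, Finset.mem_insert, Finset.mem_singleton]
      constructor
      · rintro ⟨h1 | h1, h2⟩
        · exact absurd (h1 ▸ h2) (lt_irrefl j)
        · exact h1
      · rintro rfl; exact ⟨Or.inr rfl, hlt⟩
    · rw [Finset.card_eq_zero, Finset.filter_eq_empty_iff]
      rintro u hu
      rcases Finset.mem_insert.mp hu with rfl | hu
      · exact lt_irrefl _
      · rw [Finset.mem_singleton.mp hu]; exact hlt
  have hB4 : ((vset m j).filter fun u => u < j).card + (if j.rev < j then 1 else 0)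
      = j.val := by
    rw [← hpairB, ← Finset.card_union_of_disjoint
      (Finset.disjoint_filter_filter hdisj), ← Finset.filter_union, hcover]
    have : (Finset.univ.filter fun u : Fin (2*m+2) => u < j) = Finset.Iio j := by
      ext u; simp
    rw [this, Fin.card_Iio]
  -- part C
  have hC1 : (Finset.univ.filter fun k : Fin (2*m) => j.rev < emb m j (s k)).card
      = (Finset.univ.filter fun p => (C p ∧ ¬ p.1 = 0) ∧ p.2 = Fin.last (2*m+1)).card := by
    refine Finset.card_bij (fun k _ => (mid k, Fin.last (2*m+1))) ?_ ?_ ?_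
    · intro k hk
      have hk' : j.rev < emb m j (s k) := (Finset.mem_filter.mp hk).2
      refine Finset.mem_filter.mpr ⟨Finset.mem_univ _,
        ⟨⟨lt_of_le_of_ne (Fin.le_last _) (mid_ne_last k), ?_⟩, mid_ne_zero k⟩, rfl⟩
      simpa using hk'
    · intro k1 hk1 k2 hk2 hh
      exact mid_inj (congrArg Prod.fst hh)
    · intro p hp
      simp only [Finset.mem_filter, Finset.mem_univ, true_and, hC] at hp
      obtain ⟨⟨⟨hlt, hval⟩, hp1⟩, hp2⟩ := hp
      have hp1' : p.1 ≠ Fin.last (2*m+1) := by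
        intro hh; rw [hh, hp2] at hlt; exact lt_irrefl _ hlt
      obtain ⟨k, hk⟩ := exists_eq_mid hp1 hp1'
      refine ⟨k, Finset.mem_filter.mpr ⟨Finset.mem_univ _, ?_⟩, ?_⟩
      · have := hval
        rw [hp2, hk] at this
        simpa using this
      · exact Prod.ext hk.symm hp2.symm
  have hC2 : (Finset.univ.filter fun k : Fin (2*m) => j.rev < emb m j (s k)).card
      = (Finset.univ.filter fun w : Fin (2*m) => j.rev < emb m j w).card := by
    refine Finset.card_bij (fun k _ => s k) ?_ ?_ ?_
    · intro k hk
      simp only [Finset.mem_filter, Finset.mem_univ, true_and] at hk ⊢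
      exact hk
    · intro k1 hk1 k2 hk2 hh
      exact s.injective hh
    · intro w hw
      simp only [Finset.mem_filter, Finset.mem_univ, true_and] at hw
      exact ⟨s.symm w, Finset.mem_filter.mpr ⟨Finset.mem_univ _, by simpa using hw⟩, by simp⟩
  have hC3 : (Finset.univ.filter fun w : Fin (2*m) => j.rev < emb m j w).card
      = ((vset m j).filter fun u => j.rev < u).card := by
    refine Finset.card_bij (fun w _ => emb m j w) ?_ ?_ ?_
    · intro w hw
      simp only [Finset.mem_filter, Finset.mem_univ, true_and] at hw
      exact Finset.mem_filter.mpr ⟨emb_mem j w, hw⟩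
    · intro w1 hw1 w2 hw2 hh
      exact (emb m j).injective hh
    · intro u hu
      rw [Finset.mem_filter] at hu
      obtain ⟨k, hk⟩ := emb_surj j hu.1
      exact ⟨k, Finset.mem_filter.mpr ⟨Finset.mem_univ _, hk ▸ hu.2⟩, hk⟩
  have hpairC : (({j, j.rev} : Finset (Fin (2*m+2))).filter fun u => j.rev < u).card
      = if j.rev < j then 1 else 0 := by
    split_ifs with hlt
    · rw [Finset.card_eq_one]
      refine ⟨j, ?_⟩
      ext u
      simp only [Finset.mem_filter, Finset.mem_insert, Finset.mem_singleton]
      constructor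
      · rintro ⟨h1 | h1, h2⟩
        · exact h1
        · exact absurd (h1 ▸ h2) (lt_irrefl j.rev)
      · rintro rfl; exact ⟨Or.inl rfl, hlt⟩
    · rw [Finset.card_eq_zero, Finset.filter_eq_empty_iff]
      rintro u hu
      rcases Finset.mem_insert.mp hu with rfl | hu
      · exact hlt
      · rw [Finset.mem_singleton.mp hu]; exact lt_irrefl _
  have hC4 : ((vset m j).filter fun u => j.rev < u).card + (if j.rev < j then 1 else 0)
      = j.val := by
    rw [← hpairC, ← Finset.card_union_of_disjoint
      (Finset.disjoint_filter_filter hdisj), ← Finset.filter_union, hcover]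
    have h5 : (Finset.univ.filter fun u : Fin (2*m+2) => j.rev < u) = Finset.Ioi j.rev := by
      ext u; simp
    rw [h5, Fin.card_Ioi, Fin.val_rev]
    have := j.isLt
    omega
  -- part D
  have hD : (Finset.univ.filter fun p => (C p ∧ ¬ p.1 = 0) ∧ ¬ p.2 = Fin.last (2*m+1)).card
      = inversions s := by
    rw [inversions]
    symm
    refine Finset.card_bij (fun q _ => (mid q.1, mid q.2)) ?_ ?_ ?_
    · intro q hq
      have hq' := (Finset.mem_filter.mp hq).2
      refine Finset.mem_filter.mpr ⟨Finset.mem_univ _,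
        ⟨⟨(mid_lt_iff _ _).mpr hq'.1, ?_⟩, mid_ne_zero _⟩, mid_ne_last _⟩
      simp only [F_apply, extFun_mid]
      exact (emb m j).lt_iff_lt.mpr hq'.2
    · intro q1 hq1 q2 hq2 hh
      have h1 := mid_inj (congrArg Prod.fst hh)
      have h2 := mid_inj (congrArg Prod.snd hh)
      exact Prod.ext h1 h2
    · intro p hp
      simp only [Finset.mem_filter, Finset.mem_univ, true_and, hC] at hp
      obtain ⟨⟨⟨hlt, hval⟩, hp1⟩, hp2⟩ := hp
      have hp1' : p.1 ≠ Fin.last (2*m+1) := ne_of_lt (lt_of_lt_of_le hlt (Fin.le_last _))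
      have hp2' : p.2 ≠ 0 := by
        intro hh
        rw [hh] at hlt
        exact Fin.not_lt_zero _ hlt
      obtain ⟨k1, hk1⟩ := exists_eq_mid hp1 hp1'
      obtain ⟨k2, hk2⟩ := exists_eq_mid hp2' hp2
      refine ⟨(k1, k2), Finset.mem_filter.mpr ⟨Finset.mem_univ _, ?_, ?_⟩, ?_⟩
      · rw [hk1, hk2, mid_lt_iff] at hlt; exact hlt
      · rw [hk1, hk2] at hval
        simp only [F_apply, extFun_mid] at hval
        exact (emb m j).lt_iff_lt.mp hval
      · exact Prod.ext hk1.symm hk2.symm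
  -- assembly
  rw [e0, h1, h2, h3, hA, ← hB1, hB2, hB3, ← hC1, hC2, hC3, hD]
  have hj1 : j.rev < j → 1 ≤ j.val := by
    intro hlt
    rw [Fin.lt_def, Fin.val_rev] at hlt
    have := j.isLt
    omega
  by_cases hlt : j.rev < j
  · simp only [if_pos hlt] at hB4 hC4 ⊢
    have := hj1 hlt
    omega
  · simp only [if_neg hlt] at hB4 hC4 ⊢
    omega

lemma F_surj {t : Equiv.Perm (Fin (2*m+2))} (ht : t ∈ htPerms (2*m+2)) :
    ∃ j s, s ∈ htPerms (2*m) ∧ F j s = t := by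
  rw [htPerms, Finset.mem_filter] at ht
  have ht2 := ht.2
  set j := t 0 with hj
  have hlast : t (Fin.last (2*m+1)) = j.rev := by
    have := ht2 0
    rwa [Fin.rev_zero] at this
  have hmem : ∀ k : Fin (2*m), t (mid k) ∈ vset m j := by
    intro k
    simp only [vset, Finset.mem_compl, Finset.mem_insert, Finset.mem_singleton]
    push_neg
    constructor
    · intro hh
      exact mid_ne_zero k (t.injective (hh.trans hj))
    · intro hh
      rw [← hlast] at hh
      exact mid_ne_last k (t.injective hh)
  set g : Fin (2*m) → Fin (2*m) := fun k => (eIso m j).symm ⟨t (mid k), hmem k⟩ with hg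
  have hge : ∀ k, emb m j (g k) = t (mid k) := by
    intro k
    rw [hg, ← coe_eIso]
    simp
  have hginj : Function.Injective g := by
    intro k1 k2 hh
    have h2 : emb m j (g k1) = emb m j (g k2) := congrArg _ hh
    rw [hge, hge] at h2
    exact mid_inj (t.injective h2)
  set s : Equiv.Perm (Fin (2*m)) :=
    Equiv.ofBijective g ((Finite.injective_iff_bijective).mp hginj) with hs
  have hsk : ∀ k, s k = g k := fun k => rfl
  have hsmem : s ∈ htPerms (2*m) := by
    rw [htPerms, Finset.mem_filter]
    refine ⟨Finset.mem_univ _, fun k => ?_⟩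
    apply (emb m j).injective
    rw [hsk, hsk, hge, emb_rev, hge, ← rev_mid, ht2]
  refine ⟨j, s, hsmem, ?_⟩
  apply Equiv.ext
  intro i
  rcases cases3 i with h | h | ⟨k, h⟩ <;> subst h
  · rw [F_apply, extFun_zero, hj]
  · rw [F_apply, extFun_last, hlast]
  · rw [F_apply, extFun_mid, hsk, hge]

lemma sum_rec {R : Type*} [CommRing R] (x : R) (m : ℕ) :
    ∑ t ∈ htPerms (2*m+2), x ^ inversions t =
      (∑ j : Fin (2*m+2), x ^ (if j.rev < j then 2*j.val - 1 else 2*j.val)) *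
        ∑ s ∈ htPerms (2*m), x ^ inversions s := by
  rw [Finset.sum_mul_sum, ← Finset.sum_product']
  symm
  refine Finset.sum_bij (fun p _ => F p.1 p.2) ?_ ?_ ?_ ?_
  · rintro ⟨j, s⟩ hp
    exact F_mem j ((Finset.mem_product.mp hp).2)
  · rintro ⟨j1, s1⟩ h1 ⟨j2, s2⟩ h2 hh
    have hj : j1 = j2 := by
      have := congrFun (congrArg (fun (e : Equiv.Perm (Fin (2*m+2))) => ⇑e) hh) 0
      simpa using this
    subst hj
    have hs : s1 = s2 := by
      apply Equiv.ext
      intro k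
      have := congrFun (congrArg (fun (e : Equiv.Perm (Fin (2*m+2))) => ⇑e) hh) (mid k)
      simp only [F_apply, extFun_mid] at this
      exact (emb m j1).injective this
    rw [hs]
  · intro t ht
    obtain ⟨j, s, hs, hF⟩ := F_surj ht
    exact ⟨(j, s), Finset.mem_product.mpr ⟨Finset.mem_univ _, hs⟩, hF⟩
  · rintro ⟨j, s⟩ hp
    rw [inv_F, pow_add]

lemma cexp_sum {R : Type*} [CommRing R] (a : R) (m : ℕ) :
    ∑ j : Fin (2*m+2), (-(a^2)) ^ (if j.rev < j then 2*j.val - 1 else 2*j.val) =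
      (1 - a^(4*m+2)) * ∑ k ∈ Finset.range (m+1), (a^4)^k := by
  have hcond : ∀ j : Fin (2*m+2),
      (-(a^2) : R) ^ (if j.rev < j then 2*j.val - 1 else 2*j.val) =
      (-(a^2)) ^ (if 2*m+1 < 2*j.val then 2*j.val - 1 else 2*j.val) := by
    intro j
    congr 1
    have hlt : j.rev < j ↔ 2*m+1 < 2*j.val := by
      rw [Fin.lt_def, Fin.val_rev]
      have := j.isLt
      omega
    simp only [hlt]
  rw [Finset.sum_congr rfl (fun j _ => hcond j)]
  rw [Fin.sum_univ_eq_sum_range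
    (fun v => (-(a^2) : R) ^ (if 2*m+1 < 2*v then 2*v - 1 else 2*v))]
  rw [show 2*m+2 = (m+1) + (m+1) by ring, Finset.sum_range_add]
  have hx2 : (-(a^2) : R)^2 = a^4 := by ring
  have h1 : ∀ i ∈ Finset.range (m+1),
      (-(a^2) : R) ^ (if 2*m+1 < 2*i then 2*i - 1 else 2*i) = (a^4)^i := by
    intro i hi
    rw [Finset.mem_range] at hi
    rw [if_neg (by omega), pow_mul, hx2]
  have h2 : ∀ i ∈ Finset.range (m+1),
      (-(a^2) : R) ^ (if 2*m+1 < 2*(m+1+i) then 2*(m+1+i) - 1 else 2*(m+1+i)) =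
        -(a^(4*m+2)) * (a^4)^i := by
    intro i hi
    rw [if_pos (by omega), show 2*(m+1+i) - 1 = (2*m+1) + 2*i by omega, pow_add,
      pow_mul, hx2]
    congr 1
    have hodd : Odd (2*m+1) := ⟨m, by ring⟩
    rw [hodd.neg_pow, ← pow_mul]
    ring_nf
  rw [Finset.sum_congr rfl h1, Finset.sum_congr rfl h2, ← Finset.mul_sum]
  ring

lemma htPerms_zero : htPerms 0 = {1} := by
  ext s
  simp only [htPerms, Finset.mem_filter, Finset.mem_univ, true_and, Finset.mem_singleton]
  constructor
  · intro _
    exact Equiv.ext fun i => i.elim0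
  · intro _ i
    exact i.elim0

lemma inversions_one_zero : inversions (1 : Equiv.Perm (Fin 0)) = 0 := by
  rw [inversions, Finset.card_eq_zero, Finset.filter_eq_empty_iff]
  intro p _
  exact p.1.elim0

lemma key {R : Type*} [CommRing R] (a : R) : ∀ m : ℕ,
    (-1 : R)^m * (a^4 - 1)^m * ∑ s ∈ htPerms (2*m), (-(a^2)) ^ inversions s =
      ∏ i ∈ Finset.range (2*m), (a^(2*(i+1)) - 1) := by
  intro m
  induction m with
  | zero => simp [htPerms_zero, inversions_one_zero]
  | succ m ih =>
    have hrec := sum_rec (x := (-(a^2) : R)) m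
    have hc := cexp_sum a m
    have hgeom := geom_sum_mul (a^4 : R) (m+1)
    show (-1 : R)^(m+1) * (a^4 - 1)^(m+1) *
        ∑ s ∈ htPerms (2*m+2), (-(a^2)) ^ inversions s =
      ∏ i ∈ Finset.range (2*m+2), (a^(2*(i+1)) - 1)
    rw [hrec, hc, Finset.prod_range_succ, Finset.prod_range_succ, ← ih]
    have e1 : (a : R)^(4*m+2) = (a^4)^m * a^2 := by
      rw [show 4*m+2 = 4*m+2 from rfl, pow_add, pow_mul]
    have e2 : (a : R)^(2*(2*m+1)) = (a^4)^m * a^2 := by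
      rw [show 2*(2*m+1) = 4*m+2 by ring, e1]
    have e3 : (a : R)^(2*(2*m+1+1)) = (a^4)^m * a^4 := by
      rw [show 2*(2*m+1+1) = 4*m+4 by ring, pow_add, pow_mul]
    rw [e1, e2, e3]
    rw [pow_succ (a^4 : R) m] at hgeom
    set S := ∑ s ∈ htPerms (2*m), ((-(a^2) : R)) ^ inversions s
    set G := ∑ k ∈ Finset.range (m+1), ((a^4 : R))^k
    linear_combination ((-1 : R)^m * (a^4-1)^m * S * ((a^4)^m * a^2 - 1)) * hgeom

end ST18

theorem stmt18 {F : Type*} [Field F] (a : F) (ha : a ≠ 0) (m : ℕ)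
    (h : ∀ i ∈ Finset.Icc 1 (2 * m), a ^ (2 * i) ≠ 1 ∧ a ^ (2 * i) ≠ -1) :
    (-1 : F) ^ m * (a ^ 2 - (a ^ 2)⁻¹) ^ m * a ^ (-((m * (2 * m - 1) : ℕ) : ℤ)) *
        (∑ s ∈ htPerms (2 * m), (-(a ^ 2)) ^ inversions s) =
      ∏ i ∈ Finset.range (2 * m), (a ^ (i + 1) - (a ^ (i + 1))⁻¹) := by
  clear h
  have hkey := ST18.key a m
  have hR : ∀ i ∈ Finset.range (2 * m),
      a ^ (i + 1) - (a ^ (i + 1))⁻¹ = (a ^ (2 * (i + 1)) - 1) * (a ^ (i + 1))⁻¹ := by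
    intro i _
    have hne : a ^ (i + 1) ≠ 0 := pow_ne_zero _ ha
    field_simp
    ring
  rw [Finset.prod_congr rfl hR, Finset.prod_mul_distrib, Finset.prod_inv_distrib,
    Finset.prod_pow_eq_pow_sum]
  have hsum : ∑ i ∈ Finset.range (2 * m), (i + 1) = m * (2 * m - 1) + 2 * m := by
    have h2 := Finset.sum_range_id_mul_two (2 * m)
    rw [mul_assoc] at h2
    have h3 : ∑ i ∈ Finset.range (2 * m), (i + 1) =
        (∑ i ∈ Finset.range (2 * m), i) + 2 * m := by
      rw [Finset.sum_add_distrib, Finset.sum_const, Finset.card_range, smul_eq_mul, mul_one]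
    omega
  rw [hsum]
  have hσ : a ^ 2 - (a ^ 2)⁻¹ = (a ^ 4 - 1) * (a ^ 2)⁻¹ := by
    have hne : (a : F) ^ 2 ≠ 0 := pow_ne_zero _ ha
    field_simp
  rw [hσ, mul_pow, ← inv_pow, ← pow_mul, zpow_neg, zpow_natCast, ← hkey, pow_add, mul_inv]
  ring
end
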